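/- Let V be a Hausdorff locally convex real topological vector space and K ⊆ V a nonempty compact convex set. Then any two reflections T and S of K have at least one common fixed point: there exists p₀ ∈ K with T(p₀) = p₀ and S(p₀) = p₀. -/

import Mathlib

/-!
The composite `T ∘ S` of two reflections is a continuous affine self-map of `K`, so by the
one-map case of Markov–Kakutani (a cluster point of the Cesàro means of an orbit) its fixed
points form a nonempty compact convex set `A`. On `A` the reflections agree, since
`T x = T (T (S x)) = S x`, and `T` maps `A` into itself; a fixed point of `T` in `A` is then
fixed by both.
-/

/-- `T` is affine on `K`: it preserves convex combinations of points of `K`. -/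
def IsAffineOn {V : Type*} [AddCommGroup V] [Module ℝ V] (T : V → V) (K : Set V) : Prop :=
  ∀ x ∈ K, ∀ y ∈ K, ∀ t : ℝ, 0 ≤ t → t ≤ 1 →
    T (t • x + (1 - t) • y) = t • T x + (1 - t) • T y

/-- `T` is a reflection of `K`: a continuous affine self-map of `K` with `T ∘ T = id`
on `K` (hence an affine homeomorphism of `K` onto `K`, its own inverse). -/
def IsReflection {V : Type*} [AddCommGroup V] [Module ℝ V] [TopologicalSpace V]
    (T : V → V) (K : Set V) : Prop :=
  Set.MapsTo T K K ∧ ContinuousOn T K ∧ IsAffineOn T K ∧ ∀ p ∈ K, T (T p) = p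

open Filter Topology Function

section Affine

variable {V : Type*} [AddCommGroup V] [Module ℝ V] {K : Set V} {f g : V → V}

theorem IsAffineOn.comp (hf : IsAffineOn f K) (hg : IsAffineOn g K) (hgK : Set.MapsTo g K K) :
    IsAffineOn (f ∘ g) K := by
  intro x hx y hy t ht₀ ht₁
  simp only [comp_apply, hg x hx y hy t ht₀ ht₁, hf _ (hgK hx) _ (hgK hy) t ht₀ ht₁]

theorem IsAffineOn.mono {L : Set V} (hf : IsAffineOn f K) (hLK : L ⊆ K) : IsAffineOn f L :=
  fun x hx y hy t ht₀ ht₁ => hf x (hLK hx) y (hLK hy) t ht₀ ht₁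

theorem IsAffineOn.convex_inter_fixedPoints (hf : IsAffineOn f K) (hK : Convex ℝ K) :
    Convex ℝ (K ∩ fixedPoints f) := by
  rintro x ⟨hxK, hfx⟩ y ⟨hyK, hfy⟩ a b ha hb hab
  obtain rfl : b = 1 - a := by linarith
  refine ⟨hK hxK hyK ha hb hab, ?_⟩
  change f _ = _
  rw [hf x hxK y hyK a ha (by linarith), hfx.eq, hfy.eq]

end Affine

theorem ContinuousOn.isCompact_inter_fixedPoints {X : Type*} [TopologicalSpace X] [T2Space X]
    {K : Set X} {f : X → X} (hf : ContinuousOn f K) (hK : IsCompact K) :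
    IsCompact (K ∩ fixedPoints f) :=
  hK.of_isClosed_subset ((hf.prodMk continuousOn_id).preimage_isClosed_of_isClosed
    hK.isClosed isClosed_diagonal) Set.inter_subset_left

section CesaroMean

open Finset

variable {V : Type*} [AddCommGroup V] [Module ℝ V]

noncomputable def cesaroMean (q : ℕ → V) (n : ℕ) : V :=
  ((n : ℝ) + 1)⁻¹ • ∑ i ∈ range (n + 1), q i

theorem cesaroMean_zero (q : ℕ → V) : cesaroMean q 0 = q 0 := by
  simp [cesaroMean]

theorem cesaroMean_succ (q : ℕ → V) (n : ℕ) :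
    cesaroMean q (n + 1) =
      ((n + 1 : ℝ) / (n + 2)) • cesaroMean q n + (1 - (n + 1 : ℝ) / (n + 2)) • q (n + 1) := by
  have hweight : (n + 1 : ℝ) / (n + 2) * (n + 1 : ℝ)⁻¹ = (n + 2 : ℝ)⁻¹ := by field_simp
  have hlast : 1 - (n + 1 : ℝ) / (n + 2) = (n + 2 : ℝ)⁻¹ := by field_simp; ring
  simp only [cesaroMean, smul_smul, hweight, hlast, sum_range_succ _ (n + 1), smul_add]
  push_cast
  ring_nf

theorem cesaroWeight_le_one (n : ℕ) : (n + 1 : ℝ) / (n + 2) ≤ 1 := by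
  rw [div_le_one (by positivity)]
  linarith

theorem Convex.cesaroMean_mem {K : Set V} (hK : Convex ℝ K) {q : ℕ → V} (hq : ∀ n, q n ∈ K)
    (n : ℕ) : cesaroMean q n ∈ K := by
  induction n with
  | zero => simpa only [cesaroMean_zero] using hq 0
  | succ n ih =>
    rw [cesaroMean_succ]
    exact hK ih (hq _) (by positivity) (sub_nonneg.2 (cesaroWeight_le_one n)) (by ring)

theorem IsAffineOn.map_cesaroMean {K : Set V} {f : V → V} (hf : IsAffineOn f K)
    (hK : Convex ℝ K) {q : ℕ → V} (hq : ∀ n, q n ∈ K) (n : ℕ) :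
    f (cesaroMean q n) = cesaroMean (f ∘ q) n := by
  induction n with
  | zero => simp only [cesaroMean_zero, comp_apply]
  | succ n ih =>
    rw [cesaroMean_succ, cesaroMean_succ, hf _ (hK.cesaroMean_mem hq n) _ (hq _) _ (by positivity)
      (cesaroWeight_le_one n), ih, comp_apply]

theorem cesaroMean_shift_sub (q : ℕ → V) (n : ℕ) :
    cesaroMean (fun i => q (i + 1)) n - cesaroMean q n = ((n : ℝ) + 1)⁻¹ • (q (n + 1) - q 0) := by
  rw [cesaroMean, cesaroMean, ← smul_sub, ← sum_sub_distrib, sum_range_sub]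

theorem tendsto_cesaroMean_shift_sub_zero [TopologicalSpace V] [IsTopologicalAddGroup V]
    [ContinuousSMul ℝ V] {K : Set V} (hK : IsCompact K) {q : ℕ → V} (hq : ∀ n, q n ∈ K) :
    Tendsto (fun n => cesaroMean (fun i => q (i + 1)) n - cesaroMean q n) atTop (𝓝 0) := by
  simp_rw [cesaroMean_shift_sub]
  have hbdd := (hK.isVonNBounded ℝ).sub (hK.isVonNBounded ℝ)
  have hinv : Tendsto (fun n : ℕ => ((n : ℝ) + 1)⁻¹) atTop (𝓝 0) := by
    simpa only [one_div] using tendsto_one_div_add_atTop_nhds_zero_nat (𝕜 := ℝ)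
  exact hbdd.smul_tendsto_zero (Eventually.of_forall fun n => Set.sub_mem_sub (hq _) (hq 0)) hinv

end CesaroMean

theorem IsCompact.exists_fixedPoint_of_tendsto_sub_zero {X : Type*} [AddGroup X]
    [TopologicalSpace X] [ContinuousSub X] [T2Space X] {K : Set X} (hK : IsCompact K)
    {f : X → X} (hf : ContinuousOn f K) {u : ℕ → X} (hu : ∀ n, u n ∈ K)
    (h : Tendsto (fun n => f (u n) - u n) atTop (𝓝 0)) : ∃ z ∈ K, f z = z := by
  obtain ⟨z, hzK, hz⟩ :=
    hK.exists_mapClusterPt (f := atTop) (tendsto_principal.2 (Eventually.of_forall hu))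
  obtain ⟨U, hU, huz⟩ := mapClusterPt_iff_ultrafilter.1 hz
  have huK : Tendsto u U (𝓝[K] z) := tendsto_nhdsWithin_iff.2 ⟨huz, Eventually.of_forall hu⟩
  have hlim : Tendsto (fun n => f (u n) - u n) U (𝓝 (f z - z)) :=
    ((hf z hzK).tendsto.comp huK).sub huz
  exact ⟨z, hzK, sub_eq_zero.1 (tendsto_nhds_unique hlim (h.mono_left hU))⟩

theorem IsAffineOn.exists_fixedPoint {V : Type*} [AddCommGroup V] [Module ℝ V]
    [TopologicalSpace V] [IsTopologicalAddGroup V] [ContinuousSMul ℝ V] [T2Space V]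
    {K : Set V} (hne : K.Nonempty) (hK : IsCompact K) (hconv : Convex ℝ K) {f : V → V}
    (hmaps : Set.MapsTo f K K) (hcont : ContinuousOn f K) (haff : IsAffineOn f K) :
    ∃ p ∈ K, f p = p := by
  obtain ⟨x, hx⟩ := hne
  have horbit : ∀ n, f^[n] x ∈ K := fun n => hmaps.iterate n hx
  have hshift : ∀ n, f (cesaroMean (f^[·] x) n) = cesaroMean (fun i => f^[i + 1] x) n := by
    intro n
    rw [haff.map_cesaroMean hconv horbit]
    simp only [comp_def, iterate_succ_apply']
  refine hK.exists_fixedPoint_of_tendsto_sub_zero hcont (hconv.cesaroMean_mem horbit) ?_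
  simpa only [hshift] using tendsto_cesaroMean_shift_sub_zero hK horbit

theorem two_reflections_have_common_fixed_point_general
    {V : Type*} [AddCommGroup V] [Module ℝ V] [TopologicalSpace V]
    [IsTopologicalAddGroup V] [ContinuousSMul ℝ V] [T2Space V]
    (K : Set V) (hne : K.Nonempty) (hcomp : IsCompact K) (hconv : Convex ℝ K)
    (T S : V → V) (hT : IsReflection T K) (hS : IsReflection S K) :
    ∃ p₀ ∈ K, T p₀ = p₀ ∧ S p₀ = p₀ := by
  obtain ⟨hTK, hTc, hTa, hTT⟩ := hT
  obtain ⟨hSK, hSc, hSa, hSS⟩ := hS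
  have hTSK : Set.MapsTo (T ∘ S) K K := hTK.comp hSK
  have hTSc : ContinuousOn (T ∘ S) K := hTc.comp hSc hSK
  have hTSa : IsAffineOn (T ∘ S) K := hTa.comp hSa hSK
  set A := K ∩ fixedPoints (T ∘ S)
  have hTS : ∀ x ∈ A, T x = S x := fun x ⟨hxK, hx⟩ => by
    rw [← hTT _ (hSK hxK)]
    exact congrArg T hx.eq.symm
  have hTA : Set.MapsTo T A A := fun x hxA => by
    refine ⟨hTK hxA.1, ?_⟩
    change T (S (T x)) = T x
    rw [hTS x hxA, hSS x hxA.1, hTS x hxA]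
  have hAne : A.Nonempty := hTSa.exists_fixedPoint hne hcomp hconv hTSK hTSc
  obtain ⟨p, hpA, hp⟩ := (hTa.mono Set.inter_subset_left).exists_fixedPoint hAne
    (hTSc.isCompact_inter_fixedPoints hcomp) (hTSa.convex_inter_fixedPoints hconv) hTA
    (hTc.mono Set.inter_subset_left)
  exact ⟨p, hpA.1, hp, (hTS p hpA).symm.trans hp⟩

/-- Any two reflections of a nonempty compact convex subset of a Hausdorff locally
convex real topological vector space have at least one common fixed point. -/
theorem two_reflections_have_common_fixed_point
    {V : Type*} [AddCommGroup V] [Module ℝ V] [TopologicalSpace V]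
    [IsTopologicalAddGroup V] [ContinuousSMul ℝ V] [T2Space V] [LocallyConvexSpace ℝ V]
    (K : Set V) (hne : K.Nonempty) (hcomp : IsCompact K) (hconv : Convex ℝ K)
    (T S : V → V) (hT : IsReflection T K) (hS : IsReflection S K) :
    ∃ p₀ ∈ K, T p₀ = p₀ ∧ S p₀ = p₀ :=
  two_reflections_have_common_fixed_point_general K hne hcomp hconv T S hT hS
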